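/- Let ν be a concave admissible profile, finite and real-valued on [α_min, ∞), with conjugate η(p) := inf_{α ≥ α_min}(αp - ν(α) + 1) and dual profile ν'. Define η'(p') := (p'-1)(1 - η(p'/(p'-1))) + 1 for p' > 1. Then for every α' ∈ [α'_min, α'_max), ν'(α') = sup_{p' > 1}(α' p' - η'(p') + 1). -/

import Mathlib

/-!
With `t = p' - 1` and `f = ν` on `[αmin, ∞)`, the definition of `η` turns the quantity under the
supremum into `inf_{a ≥ αmin} ((α' + a) + t (α' + a - f a))`. Every `a` with `f a - a > α'` makes
the bracket smaller than `α' + a`, so the supremum is at most `α' + A`, where `A` is the infimum of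
such `a`. Conversely, by concavity `f a - a - α'` lies below a line of some slope `1/t > 0` through
`(A - ε, 0)` (for `A - ε ≤ αmin` any steep line does, as `f ≤ 1`), and this `t` makes the infimum at
least `α' + A - ε`. The hypotheses on `α'` force `α' + A ∈ [0, 1]`, where the clamp in
`ν'(α') = ⌊⌊α' + A⌋⌋` is the identity.
-/

noncomputable section
open Filter Set Topology

/-- Clamp an extended real into `{-∞} ∪ [0,1]`. -/
def clamp (b : EReal) : EReal := if b < 0 then ⊥ else min b 1

/-- The dual profile `ν'(α') = ⌊⌊ α' + inf{α : ν(α) - α > α'} ⌋⌋` (with `inf ∅ = +∞`). -/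
def dualProfile (ν : ℝ → EReal) (a' : ℝ) : EReal :=
  clamp ((a' : EReal) +
    sInf ((fun a : ℝ => (a : EReal)) '' {a : ℝ | (a' : EReal) < ν a - (a : EReal)}))

theorem EReal.isLUB_coe_image {s : Set ℝ} {c : ℝ} (h : IsLUB s c) :
    IsLUB (((↑) : ℝ → EReal) '' s) c := by
  refine ⟨?_, fun b hb => ?_⟩
  · rintro _ ⟨x, hx, rfl⟩
    exact EReal.coe_le_coe_iff.2 (h.1 hx)
  induction b using EReal.rec with
  | bot =>
    obtain ⟨x, hx⟩ := h.nonempty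
    exact absurd (hb ⟨x, hx, rfl⟩) (EReal.bot_lt_coe x).not_ge
  | top => exact le_top
  | coe r => exact EReal.coe_le_coe_iff.2 (h.2 fun x hx => EReal.coe_le_coe_iff.1 (hb ⟨x, hx, rfl⟩))

theorem EReal.isGLB_coe_image {s : Set ℝ} {c : ℝ} (h : IsGLB s c) :
    IsGLB (((↑) : ℝ → EReal) '' s) c := by
  refine ⟨?_, fun b hb => ?_⟩
  · rintro _ ⟨x, hx, rfl⟩
    exact EReal.coe_le_coe_iff.2 (h.1 hx)
  induction b using EReal.rec with
  | bot => exact bot_le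
  | top =>
    obtain ⟨x, hx⟩ := h.nonempty
    exact absurd (hb ⟨x, hx, rfl⟩) (EReal.coe_lt_top x).not_ge
  | coe r => exact EReal.coe_le_coe_iff.2 (h.2 fun x hx => EReal.coe_le_coe_iff.1 (hb ⟨x, hx, rfl⟩))

theorem EReal.toReal_le_one_of_le_one {x : EReal} (h : x ≤ 1) : x.toReal ≤ 1 := by
  induction x using EReal.rec with
  | bot => simp
  | top => exact absurd h (not_le.2 (EReal.coe_lt_top 1))
  | coe r => exact_mod_cast h

theorem ConcaveOn.exists_le_add_mul_sub {s : Set ℝ} {f : ℝ → ℝ} (hf : ConcaveOn ℝ s f)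
    {x m y : ℝ} (hx : x ∈ s) (hy : y ∈ s) (hxm : x < m) (hmy : m < y) :
    ∃ K, ∀ a ∈ s, f a ≤ f m + K * (a - m) := by
  set leftSlopes := (fun a => (f m - f a) / (m - a)) '' {a ∈ s | a < m}
  have hbdd : BddBelow leftSlopes := by
    refine ⟨(f y - f m) / (y - m), ?_⟩
    rintro _ ⟨a, ⟨ha, ham⟩, rfl⟩
    exact hf.slope_anti_adjacent ha hy ham hmy
  refine ⟨sInf leftSlopes, fun a ha => ?_⟩
  rcases lt_trichotomy a m with ham | rfl | hma
  · have := csInf_le hbdd ⟨a, ⟨ha, ham⟩, rfl⟩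
    rw [le_div_iff₀ (sub_pos.2 ham)] at this
    linarith
  · simp
  · have : (f a - f m) / (a - m) ≤ sInf leftSlopes := by
      refine le_csInf ⟨_, ⟨x, ⟨hx, hxm⟩, rfl⟩⟩ ?_
      rintro _ ⟨b, ⟨hb, hbm⟩, rfl⟩
      exact hf.slope_anti_adjacent hb ha hbm hma
    rw [div_le_iff₀ (sub_pos.2 hma)] at this
    linarith

theorem clamp_mono : Monotone clamp := by
  intro b c hbc
  unfold clamp
  split_ifs with hb hc hc
  · exact le_rfl
  · exact bot_le
  · exact absurd (hbc.trans_lt hc) hb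
  · exact min_le_min_right 1 hbc

theorem clamp_nonneg_iff {b : EReal} : 0 ≤ clamp b ↔ 0 ≤ b := by
  unfold clamp
  split_ifs with h
  · simpa using h
  · simp [not_lt.1 h]

theorem clamp_top : clamp ⊤ = 1 := by simp [clamp]

theorem clamp_coe_of_mem_Icc {x : ℝ} (hx : x ∈ Icc 0 1) : clamp x = x := by
  rw [clamp, if_neg (not_lt.2 (EReal.coe_nonneg.2 hx.1))]
  exact min_eq_left (by exact_mod_cast hx.2)

/-- The set `{α : ν(α) - α > β}` of the dual profile, written with `f = ν.toReal`, which agrees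
with `ν` on `[αmin, ∞)` and nowhere else is `ν` finite. -/
def gapSet (f : ℝ → ℝ) (αmin β : ℝ) : Set ℝ := {a | αmin ≤ a ∧ β < f a - a}

section gapSet

variable {f : ℝ → ℝ} {αmin α' : ℝ}

theorem bddBelow_gapSet (β : ℝ) : BddBelow (gapSet f αmin β) := ⟨αmin, fun _ ha => ha.1⟩

theorem sub_le_of_lt_sInf_gapSet {a : ℝ} (ha : αmin ≤ a) (hlt : a < sInf (gapSet f αmin α')) :
    f a - a ≤ α' :=
  not_lt.1 fun h => hlt.not_ge (csInf_le (bddBelow_gapSet α') ⟨ha, h⟩)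

theorem neg_le_of_mem_gapSet
    (hpos : ∀ γ, α' < γ → 0 ≤ (γ : EReal) + sInf (((↑) : ℝ → EReal) '' gapSet f αmin γ))
    {a : ℝ} (ha : a ∈ gapSet f αmin α') : -α' ≤ a := by
  by_contra! hlt
  obtain ⟨γ, hα'γ, hγ⟩ := exists_between (lt_min (lt_neg.1 hlt) ha.2)
  have hle : sInf (((↑) : ℝ → EReal) '' gapSet f αmin γ) ≤ a :=
    sInf_le ⟨a, ⟨ha.1, hγ.trans_le (min_le_right _ _)⟩, rfl⟩
  have : (0 : EReal) ≤ (γ + a : ℝ) :=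
    (hpos γ hα'γ).trans (EReal.coe_add γ a ▸ add_le_add le_rfl hle)
  linarith [EReal.coe_nonneg.1 this, hγ.trans_le (min_le_left _ _)]

theorem clamp_add_sInf_gapSet (hf1 : ∀ a, αmin ≤ a → f a ≤ 1)
    (hpos : ∀ γ, α' < γ → 0 ≤ (γ : EReal) + sInf (((↑) : ℝ → EReal) '' gapSet f αmin γ))
    (hne : (gapSet f αmin α').Nonempty) :
    clamp (α' + sInf (((↑) : ℝ → EReal) '' gapSet f αmin α')) =
      (α' + sInf (gapSet f αmin α') : ℝ) := by
  obtain ⟨a₀, ha₀⟩ := hne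
  rw [(EReal.isGLB_coe_image (isGLB_csInf ⟨a₀, ha₀⟩ (bddBelow_gapSet α'))).sInf_eq, ← EReal.coe_add]
  refine clamp_coe_of_mem_Icc ⟨?_, ?_⟩
  · linarith [le_csInf ⟨a₀, ha₀⟩ fun a ha => neg_le_of_mem_gapSet hpos ha]
  · linarith [csInf_le (bddBelow_gapSet α') ha₀, ha₀.2, hf1 a₀ ha₀.1]

theorem exists_add_sInf_gapSet_sub_le (hconc : ConcaveOn ℝ (Ici αmin) f)
    (hf1 : ∀ a, αmin ≤ a → f a ≤ 1) (hne : (gapSet f αmin α').Nonempty) {ε : ℝ} (hε : 0 < ε) :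
    ∃ p' > 1, ∀ a, αmin ≤ a →
      α' + sInf (gapSet f αmin α') - ε ≤ (α' + a) + (p' - 1) * (α' + a - f a) := by
  set A := sInf (gapSet f αmin α')
  obtain ⟨a₀, ha₀min, ha₀⟩ := hne
  have hAa₀ : A ≤ a₀ := csInf_le (bddBelow_gapSet α') ⟨ha₀min, ha₀⟩
  suffices ∃ K > 0, ∀ a, αmin ≤ a → f a - a - α' ≤ K * (a - (A - ε)) by
    obtain ⟨K, hK, hle⟩ := this
    refine ⟨1 + K⁻¹, by simpa using hK, fun a ha => ?_⟩
    have := mul_le_mul_of_nonneg_left (hle a ha) (inv_nonneg.2 hK.le)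
    rw [← mul_assoc, inv_mul_cancel₀ hK.ne', one_mul] at this
    rw [add_sub_cancel_left]
    linarith
  rcases lt_or_ge αmin (A - ε) with hm | hm
  · -- a supergradient `K` of `f` at `A - ε` makes `K - 1` a supergradient of `f a - a - α'`
    obtain ⟨K, hK⟩ := hconc.exists_le_add_mul_sub (mem_Ici.2 le_rfl) (mem_Ici.2 ha₀min) hm
      (by linarith)
    have hfm := sub_le_of_lt_sInf_gapSet hm.le (show A - ε < A by linarith)
    have hle : ∀ a, αmin ≤ a → f a - a - α' ≤ (K - 1) * (a - (A - ε)) := fun a ha => by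
      linarith [hK a (mem_Ici.2 ha)]
    refine ⟨K - 1, lt_of_mul_lt_mul_right ?_ (sub_nonneg.2 (show A - ε ≤ a₀ by linarith)), hle⟩
    linarith [hle a₀ ha₀min]
  · refine ⟨max 1 ((1 - A - α') / ε), lt_of_lt_of_le one_pos (le_max_left _ _), fun a ha => ?_⟩
    rcases lt_or_ge a A with haA | haA
    · have := sub_le_of_lt_sInf_gapSet ha haA
      have : 0 ≤ max 1 ((1 - A - α') / ε) * (a - (A - ε)) :=
        mul_nonneg (le_trans zero_le_one (le_max_left _ _)) (by linarith)
      linarith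
    · calc f a - a - α' ≤ (1 - A - α') / ε * ε := by
            rw [div_mul_cancel₀ _ hε.ne']; linarith [hf1 a ha]
        _ ≤ max 1 ((1 - A - α') / ε) * (a - (A - ε)) :=
            mul_le_mul (le_max_right _ _) (by linarith) hε.le
              (le_trans zero_le_one (le_max_left _ _))

end gapSet

section conjugate

variable {f : ℝ → ℝ} {αmin α' : ℝ} {η : ℝ → ℝ}

theorem isGLB_dualConjugate {p' : ℝ} (hp' : 1 < p')
    (hη : IsGLB {v | ∃ a, αmin ≤ a ∧ v = a * (p' / (p' - 1)) - f a + 1} (η (p' / (p' - 1)))) :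
    IsGLB {v | ∃ a, αmin ≤ a ∧ v = (α' + a) + (p' - 1) * (α' + a - f a)}
      (α' * p' - ((p' - 1) * (1 - η (p' / (p' - 1))) + 1) + 1) := by
  have ht : 0 < p' - 1 := sub_pos.2 hp'
  -- the affine map `v ↦ (p' - 1) v + α' p' - (p' - 1)` carries one set and its infimum to the other
  have key : ∀ a, (α' + a) + (p' - 1) * (α' + a - f a)
      = (p' - 1) * (a * (p' / (p' - 1)) - f a + 1) + (α' * p' - (p' - 1)) := fun a => by
    field_simp
    ring
  refine ⟨?_, fun L hL => ?_⟩
  · rintro _ ⟨a, ha, rfl⟩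
    rw [key]
    nlinarith [hη.1 ⟨a, ha, rfl⟩]
  · have : (L - (α' * p' - (p' - 1))) / (p' - 1) ≤ η (p' / (p' - 1)) := by
      refine hη.2 ?_
      rintro _ ⟨a, ha, rfl⟩
      rw [div_le_iff₀ ht]
      linarith [hL ⟨a, ha, rfl⟩, key a]
    rw [div_le_iff₀ ht] at this
    linarith

theorem isLUB_dualConjugate (hconc : ConcaveOn ℝ (Ici αmin) f)
    (hf1 : ∀ a, αmin ≤ a → f a ≤ 1)
    (hη : ∀ p : ℝ, 0 < p → IsGLB {v | ∃ a, αmin ≤ a ∧ v = a * p - f a + 1} (η p))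
    (hne : (gapSet f αmin α').Nonempty) :
    IsLUB ((fun p' => α' * p' - ((p' - 1) * (1 - η (p' / (p' - 1))) + 1) + 1) '' Ioi 1)
      (α' + sInf (gapSet f αmin α')) := by
  have hglb := fun p' (hp' : 1 < p') =>
    isGLB_dualConjugate (α' := α') hp' (hη _ (div_pos (by linarith) (sub_pos.2 hp')))
  refine ⟨?_, fun L hL => le_of_forall_pos_le_add fun ε hε => ?_⟩
  · rintro _ ⟨p', hp', rfl⟩
    rw [← sub_le_iff_le_add']
    refine le_csInf hne fun a ⟨ha, hgap⟩ => ?_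
    have := (hglb p' hp').1 ⟨a, ha, rfl⟩
    have : (p' - 1) * (α' + a - f a) ≤ 0 :=
      mul_nonpos_of_nonneg_of_nonpos (sub_nonneg.2 (le_of_lt hp')) (by linarith)
    dsimp only
    linarith
  · obtain ⟨p', hp', hle⟩ := exists_add_sInf_gapSet_sub_le hconc hf1 hne hε
    have := (hglb p' hp').2 (by rintro _ ⟨a, ha, rfl⟩; exact hle a ha)
    linarith [hL ⟨p', hp', rfl⟩]

end conjugate

section dualProfile

variable {ν : ℝ → EReal}

theorem dualProfile_mono (ν : ℝ → EReal) : Monotone (dualProfile ν) := fun _ _ hβγ =>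
  clamp_mono <| add_le_add (EReal.coe_le_coe_iff.2 hβγ) <| sInf_le_sInf <|
    image_mono fun _ ha => (EReal.coe_le_coe_iff.2 hβγ).trans_lt ha

theorem dualProfile_nonneg_of_sInf_le {α' γ : ℝ}
    (hge : sInf ((fun a : ℝ => (a : EReal)) '' {a' | 0 ≤ dualProfile ν a'}) ≤ (α' : EReal))
    (hγ : α' < γ) : 0 ≤ dualProfile ν γ := by
  obtain ⟨_, ⟨β, hβ, rfl⟩, hβγ⟩ := sInf_lt_iff.1 (hge.trans_lt (EReal.coe_lt_coe_iff.2 hγ))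
  exact hβ.trans (dualProfile_mono ν (EReal.coe_le_coe_iff.1 hβγ.le))

theorem dualProfile_ne_one_of_lt_sInf {α' : ℝ}
    (hlt : (α' : EReal) < sInf ((fun a : ℝ => (a : EReal)) '' {a' | dualProfile ν a' = 1})) :
    dualProfile ν α' ≠ 1 :=
  fun h => hlt.not_ge (sInf_le ⟨α', h, rfl⟩)

theorem coe_toReal_of_le {αmin a : ℝ} (hle : ∀ a, ν a ≤ 1) (hbot : ∀ a, ν a = ⊥ ↔ a < αmin)
    (ha : αmin ≤ a) : ((ν a).toReal : EReal) = ν a :=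
  EReal.coe_toReal (ne_top_of_le_ne_top (EReal.coe_ne_top 1) (hle a))
    (fun h => ((hbot a).1 h).not_ge ha)

theorem setOf_lt_sub_eq_gapSet {αmin : ℝ} (hle : ∀ a, ν a ≤ 1)
    (hbot : ∀ a, ν a = ⊥ ↔ a < αmin) (β : ℝ) :
    {a : ℝ | (β : EReal) < ν a - a} = gapSet (fun a => (ν a).toReal) αmin β := by
  ext a
  by_cases ha : αmin ≤ a
  · rw [mem_ofPred_eq, ← coe_toReal_of_le hle hbot ha, ← EReal.coe_sub, EReal.coe_lt_coe_iff]
    exact ⟨fun h => ⟨ha, h⟩, fun h => h.2⟩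
  · rw [mem_ofPred_eq, (hbot a).2 (not_le.1 ha), EReal.bot_sub]
    exact ⟨fun h => absurd h not_lt_bot, fun h => absurd h.1 ha⟩

theorem dualProfile_eq_clamp {αmin : ℝ} (hle : ∀ a, ν a ≤ 1)
    (hbot : ∀ a, ν a = ⊥ ↔ a < αmin) (β : ℝ) :
    dualProfile ν β =
      clamp (β + sInf (((↑) : ℝ → EReal) '' gapSet (fun a => (ν a).toReal) αmin β)) := by
  rw [dualProfile, setOf_lt_sub_eq_gapSet hle hbot]

end dualProfile

theorem stmt13_general (ν : ℝ → EReal)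
    (hval : ∀ a : ℝ, ν a = ⊥ ∨ (0 ≤ ν a ∧ ν a ≤ 1))
    (αmin : ℝ)
    (hbot : ∀ a : ℝ, ν a = ⊥ ↔ a < αmin)
    (hconc : ConcaveOn ℝ (Set.Ici αmin) (fun a => (ν a).toReal))
    (η : ℝ → ℝ)
    (hη : ∀ p : ℝ, 0 < p →
      IsGLB {v : ℝ | ∃ a : ℝ, αmin ≤ a ∧ v = a * p - (ν a).toReal + 1} (η p)) :
    ∀ α' : ℝ,
      sInf ((fun a : ℝ => (a : EReal)) '' {a' : ℝ | 0 ≤ dualProfile ν a'}) ≤ (α' : EReal) →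
      (α' : EReal) < sInf ((fun a : ℝ => (a : EReal)) '' {a' : ℝ | dualProfile ν a' = 1}) →
      dualProfile ν α' =
        sSup ((fun p' : ℝ =>
          ((α' * p' - ((p' - 1) * (1 - η (p' / (p' - 1))) + 1) + 1 : ℝ) : EReal)) ''
            Set.Ioi (1 : ℝ)) := by
  intro α' hge hlt
  have hle : ∀ a, ν a ≤ 1 := fun a => (hval a).elim (fun h => h ▸ bot_le) And.right
  have hf1 : ∀ a, αmin ≤ a → (ν a).toReal ≤ 1 := fun a _ => EReal.toReal_le_one_of_le_one (hle a)
  have hdual := dualProfile_eq_clamp hle hbot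
  have hpos : ∀ γ, α' < γ →
      0 ≤ (γ : EReal) + sInf ((↑) '' gapSet (fun a => (ν a).toReal) αmin γ) := fun γ hγ =>
    clamp_nonneg_iff.1 (hdual γ ▸ dualProfile_nonneg_of_sInf_le hge hγ)
  have hne : (gapSet (fun a => (ν a).toReal) αmin α').Nonempty := by
    refine nonempty_iff_ne_empty.2 fun hempty => dualProfile_ne_one_of_lt_sInf hlt ?_
    rw [hdual, hempty, image_empty, sInf_empty, EReal.coe_add_top, clamp_top]
  have hlub := EReal.isLUB_coe_image (isLUB_dualConjugate hconc hf1 hη hne)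
  rw [image_image] at hlub
  rw [hdual, clamp_add_sInf_gapSet hf1 hpos hne, hlub.sSup_eq]

theorem stmt13 (ν : ℝ → EReal)
    (hmono : Monotone ν)
    (hrc : ∀ a : ℝ, ContinuousWithinAt ν (Set.Ici a) a)
    (hval : ∀ a : ℝ, ν a = ⊥ ∨ (0 ≤ ν a ∧ ν a ≤ 1))
    (αmin : ℝ)
    (hbot : ∀ a : ℝ, ν a = ⊥ ↔ a < αmin)
    (hconc : ConcaveOn ℝ (Set.Ici αmin) (fun a => (ν a).toReal))
    (η : ℝ → ℝ)
    (hη : ∀ p : ℝ, 0 < p →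
      IsGLB {v : ℝ | ∃ a : ℝ, αmin ≤ a ∧ v = a * p - (ν a).toReal + 1} (η p)) :
    ∀ α' : ℝ,
      sInf ((fun a : ℝ => (a : EReal)) '' {a' : ℝ | 0 ≤ dualProfile ν a'}) ≤ (α' : EReal) →
      (α' : EReal) < sInf ((fun a : ℝ => (a : EReal)) '' {a' : ℝ | dualProfile ν a' = 1}) →
      dualProfile ν α' =
        sSup ((fun p' : ℝ =>
          ((α' * p' - ((p' - 1) * (1 - η (p' / (p' - 1))) + 1) + 1 : ℝ) : EReal)) ''
            Set.Ioi (1 : ℝ)) :=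
  stmt13_general ν hval αmin hbot hconc η hη
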